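/- Let n ≥ 1, let π be a 132-avoiding permutation of {1,…,n} with π(k) = n, and let π₁ = (π(1),…,π(k−1)), π₂ = (π(k+1),…,π(n)). Then |12(π)| = |12(π₁)| + |12(π₂)| + (k−1); that is, the number of (12) patterns of π equals the number of (12) patterns among indices less than k, plus the number among indices greater than k, plus the length k−1 of π₁. -/
import Mathlib


/-- `Avoids132 a` says the finite sequence `a` contains no (132) pattern,
i.e. no indices `i < j < k` with `a i < a k < a j`. -/
def Avoids132 {m : ℕ} (a : Fin m → ℕ) : Prop :=
  ∀ i j k : Fin m, i < j → j < k → ¬ (a i < a k ∧ a k < a j)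

/-- `count12 a` is the number of (12) patterns of the finite sequence `a`,
i.e. the number of pairs of indices `i < j` with `a i < a j`. -/
def count12 {m : ℕ} (a : Fin m → ℕ) : ℕ :=
  (Finset.univ.filter (fun t : Fin m × Fin m =>
    t.1 < t.2 ∧ a t.1 < a t.2)).card

/-- Let `n ≥ 1`, let `π` be a 132-avoiding permutation of `{1,…,n}`
(written as a bijective sequence `π : Fin n → ℕ`) with the value `n` at
position `k`, and let `π₁`, `π₂` be the subsequences of `π` strictly before
and strictly after position `k` (so `π₁` has length `k`, i.e. `k-1` in the
1-indexed convention where `n` sits at 1-indexed position `k+1`).  Then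
`|12(π)| = |12(π₁)| + |12(π₂)| + |π₁|`, where `|π₁|` is the length of `π₁`. -/
theorem stmt3 (n : ℕ) (hn : 1 ≤ n) (π : Fin n → ℕ)
    (hbij : Set.BijOn π Set.univ (Set.Icc 1 n))
    (havoid : Avoids132 π)
    (k : Fin n) (hk : π k = n)
    (π₁ : Fin (k : ℕ) → ℕ)
    (hπ₁ : π₁ = fun i : Fin (k : ℕ) => π ⟨i.1, lt_trans i.isLt k.isLt⟩)
    (π₂ : Fin (n - (k : ℕ) - 1) → ℕ)
    (hπ₂ : π₂ = fun i : Fin (n - (k : ℕ) - 1) =>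
      π ⟨(k : ℕ) + 1 + i.1, by have := i.isLt; have := k.isLt; omega⟩) :
    count12 π = count12 π₁ + count12 π₂ + (k : ℕ) := by
  subst hπ₁ hπ₂
  -- basic facts
  have hinj : Function.Injective π := fun a b hab => by
    have := hbij.injOn (Set.mem_univ a) (Set.mem_univ b) hab
    exact this
  have hle : ∀ j : Fin n, π j ≤ n := fun j => (hbij.mapsTo (Set.mem_univ j)).2
  have hlt : ∀ j : Fin n, j ≠ k → π j < n := fun j hj => by
    have h1 := hle j
    have h2 : π j ≠ n := fun h => hj (hinj (h.trans hk.symm))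
    omega
  set e1 : Fin (k : ℕ) → Fin n := fun i => ⟨i.1, lt_trans i.isLt k.isLt⟩ with he1
  set e2 : Fin (n - (k : ℕ) - 1) → Fin n :=
    fun i => ⟨(k : ℕ) + 1 + i.1, by have := i.isLt; have := k.isLt; omega⟩ with he2
  set S := Finset.univ.filter (fun t : Fin n × Fin n => t.1 < t.2 ∧ π t.1 < π t.2) with hS
  set A := (Finset.univ.filter (fun t : Fin (k:ℕ) × Fin (k:ℕ) =>
      t.1 < t.2 ∧ π (e1 t.1) < π (e1 t.2))).image (Prod.map e1 e1) with hA
  set B := (Finset.univ.filter (fun t : Fin (n-(k:ℕ)-1) × Fin (n-(k:ℕ)-1) =>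
      t.1 < t.2 ∧ π (e2 t.1) < π (e2 t.2))).image (Prod.map e2 e2) with hB
  set C := (Finset.univ : Finset (Fin (k:ℕ))).image (fun i => (e1 i, k)) with hC
  have he1inj : Function.Injective e1 := fun a b hab => by
    apply Fin.ext
    have := congrArg Fin.val hab
    simpa [he1] using this
  have he2inj : Function.Injective e2 := fun a b hab => by
    apply Fin.ext
    have := congrArg Fin.val hab
    simpa [he2] using this
  have hSsplit : S = A ∪ B ∪ C := by
    ext ⟨i, j⟩
    simp only [hS, hA, hB, hC, Finset.mem_union, Finset.mem_image, Finset.mem_filter,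
      Finset.mem_univ, true_and, Prod.exists, Prod.map_apply, Prod.mk.injEq]
    constructor
    · rintro ⟨hij, hval⟩
      rcases lt_trichotomy (j : ℕ) (k : ℕ) with hjk | hjk | hjk
      · left; left
        refine ⟨⟨i.1, lt_trans hij hjk⟩, ⟨j.1, hjk⟩, ⟨?_, ?_⟩, ?_, ?_⟩
        · exact hij
        · convert hval using 2 <;> simp [he1]
        · simp [he1]
        · simp [he1]
      · right
        have hjeq : j = k := Fin.ext hjk
        refine ⟨⟨i.1, ?_⟩, ?_, ?_⟩
        · omega
        · simp [he1]
        · exact hjeq.symm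
      · -- j > k
        rcases lt_trichotomy (i : ℕ) (k : ℕ) with hik | hik | hik
        · -- 132 pattern: i < k < j with π i < π j < π k
          exfalso
          have hjlt : π j < n := hlt j (fun h => by simp [h] at hjk)
          exact havoid i k j hik hjk ⟨hval, by omega⟩
        · exfalso
          have hieq : i = k := Fin.ext hik
          have : π j < n := hlt j (fun h => by simp [h] at hjk)
          rw [hieq, hk] at hval; omega
        · left; right
          refine ⟨⟨i.1 - (k:ℕ) - 1, by omega⟩, ⟨j.1 - (k:ℕ) - 1, by omega⟩,
            ⟨?_, ?_⟩, ?_, ?_⟩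
          · simp only [Fin.mk_lt_mk]; omega
          · convert hval using 2 <;> (apply Fin.ext; simp [he2]; omega)
          · apply Fin.ext; simp [he2]; omega
          · apply Fin.ext; simp [he2]; omega
    · rintro ((⟨a, b, ⟨hab, hv⟩, ha, hb⟩ | ⟨a, b, ⟨hab, hv⟩, ha, hb⟩) | ⟨a, ha, hb⟩)
      · subst ha hb
        constructor
        · exact hab
        · exact hv
      · subst ha hb
        constructor
        · simp only [he2, Fin.lt_def]
          have := (Fin.lt_def).mp hab
          omega
        · exact hv
      · subst ha hb
        constructor
        · exact a.isLt
        · rw [hk]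
          refine hlt (e1 a) (fun h => ?_)
          have h2 := congrArg Fin.val h
          simp only [he1] at h2
          have := a.isLt
          omega
  have hdisjAB : Disjoint A B := by
    rw [Finset.disjoint_left]
    rintro ⟨i, j⟩ hiA hiB
    simp only [hA, hB, Finset.mem_image, Finset.mem_filter, Prod.exists,
      Prod.map_apply, Prod.mk.injEq] at hiA hiB
    obtain ⟨a, b, _, ha, _⟩ := hiA
    obtain ⟨a', b', _, ha', _⟩ := hiB
    have h1 := congrArg Fin.val ha
    have h2 := congrArg Fin.val ha'
    simp [he1, he2] at h1 h2
    omega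
  have hdisjABC : Disjoint (A ∪ B) C := by
    rw [Finset.disjoint_left]
    rintro ⟨i, j⟩ hiAB hiC
    simp only [hC, Finset.mem_image, Finset.mem_univ, true_and, Prod.mk.injEq] at hiC
    obtain ⟨a, _, hb⟩ := hiC
    simp only [hA, hB, Finset.mem_union, Finset.mem_image, Finset.mem_filter,
      Prod.exists, Prod.map_apply, Prod.mk.injEq] at hiAB
    rcases hiAB with ⟨a', b', _, _, hb'⟩ | ⟨a', b', _, _, hb'⟩
    · have h1 := congrArg Fin.val hb'
      have h2 := congrArg Fin.val hb
      simp [he1] at h1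
      omega
    · have h1 := congrArg Fin.val hb'
      have h2 := congrArg Fin.val hb
      simp [he2] at h1
      omega
  have hcardA : A.card = count12 (fun i : Fin (k:ℕ) => π (e1 i)) := by
    rw [hA, Finset.card_image_of_injective _
      (Function.Injective.prodMap he1inj he1inj)]
    rfl
  have hcardB : B.card = count12 (fun i : Fin (n-(k:ℕ)-1) => π (e2 i)) := by
    rw [hB, Finset.card_image_of_injective _
      (Function.Injective.prodMap he2inj he2inj)]
    rfl
  have hcardC : C.card = (k : ℕ) := by
    rw [hC, Finset.card_image_of_injective _ (fun a b hab => he1inj (congrArg Prod.fst hab))]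
    simp
  have : count12 π = S.card := rfl
  rw [this, hSsplit, Finset.card_union_of_disjoint hdisjABC,
    Finset.card_union_of_disjoint hdisjAB, hcardA, hcardB, hcardC]
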